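/- arXiv:2211.06501 — 6 statements merged into one kernel-verified Lean document; each statement's English description precedes it below -/
import Mathlib

section
/- For any skew-symmetric real n×n matrix W, the quadratic bracket {F,H}_W = Σ_{i<j} W_{ij} x_i x_j (∂F/∂x_i ∂H/∂x_j − ∂F/∂x_j ∂H/∂x_i) satisfies the Jacobi identity on smooth functions, i.e., {F,{G,H}} + {G,{H,F}} + {H,{F,G}} = 0. -/
open Matrix

/-- The quadratic Poisson bracket `{F,H}_W` associated to an `n × n` matrix `W`. -/
noncomputable def quadBracket {n : ℕ} (W : Matrix (Fin n) (Fin n) ℝ)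
    (F H : (Fin n → ℝ) → ℝ) (x : Fin n → ℝ) : ℝ :=
  ∑ i : Fin n, ∑ j : Fin n, if i < j then
    W i j * x i * x j *
      (fderiv ℝ F x (Pi.single i 1) * fderiv ℝ H x (Pi.single j 1) -
       fderiv ℝ F x (Pi.single j 1) * fderiv ℝ H x (Pi.single i 1))
  else 0

namespace QuadJacobi


variable {n : ℕ}

noncomputable def pd (F : (Fin n → ℝ) → ℝ) (i : Fin n) (x : Fin n → ℝ) : ℝ :=
  fderiv ℝ F x (Pi.single i 1)

lemma contDiff_pd {F : (Fin n → ℝ) → ℝ} (hF : ContDiff ℝ (⊤ : ℕ∞) F) (i : Fin n) :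
    ContDiff ℝ (⊤ : ℕ∞) (pd F i) := by
  have h1 : ContDiff ℝ (⊤ : ℕ∞) (fderiv ℝ F) := hF.fderiv_right (by simp)
  exact (ContinuousLinearMap.apply ℝ ℝ (Pi.single i 1)).contDiff.comp h1

lemma diff_pd {F : (Fin n → ℝ) → ℝ} (hF : ContDiff ℝ (⊤ : ℕ∞) F) (i : Fin n) :
    Differentiable ℝ (pd F i) := (contDiff_pd hF i).differentiable (by simp)

lemma pd_pd_eq {F : (Fin n → ℝ) → ℝ} (hF : ContDiff ℝ (⊤ : ℕ∞) F) (i k : Fin n) (x : Fin n → ℝ) :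
    pd (pd F i) k x = fderiv ℝ (fderiv ℝ F) x (Pi.single k 1) (Pi.single i 1) := by
  have hc : DifferentiableAt ℝ (fderiv ℝ F) x :=
    ((hF.fderiv_right (m := (⊤ : ℕ∞)) (by simp)).differentiable (by simp)) x
  have : pd F i = fun y => (fderiv ℝ F y) ((fun _ : Fin n → ℝ => (Pi.single i 1 : Fin n → ℝ)) y) := rfl
  rw [pd, this, fderiv_clm_apply hc (differentiableAt_const _)]
  simp

lemma pd_symm {F : (Fin n → ℝ) → ℝ} (hF : ContDiff ℝ (⊤ : ℕ∞) F) (i k : Fin n) (x : Fin n → ℝ) :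
    pd (pd F i) k x = pd (pd F k) i x := by
  rw [pd_pd_eq hF, pd_pd_eq hF]
  exact (hF.contDiffAt.isSymmSndFDerivAt (by rw [minSmoothness_of_isRCLikeNormedField]; exact WithTop.coe_le_coe.mpr (le_top : (2 : ℕ∞) ≤ ⊤))) _ _


variable {n : ℕ}

lemma fderiv_mul_apply' {f g : (Fin n → ℝ) → ℝ} {x v : Fin n → ℝ}
    (hf : DifferentiableAt ℝ f x) (hg : DifferentiableAt ℝ g x) :
    fderiv ℝ (fun y => f y * g y) x v = fderiv ℝ f x v * g x + f x * fderiv ℝ g x v := by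
  rw [fderiv_fun_mul hf hg]
  simp [smul_eq_mul]
  ring

lemma fderiv_coord (i : Fin n) (x v : Fin n → ℝ) :
    fderiv ℝ (fun y : Fin n → ℝ => y i) x v = v i := by
  have : (fun y : Fin n → ℝ => y i) = (ContinuousLinearMap.proj i : (Fin n → ℝ) →L[ℝ] ℝ) := rfl
  rw [this, ContinuousLinearMap.fderiv]
  rfl

lemma diff_coord (i : Fin n) : Differentiable ℝ (fun y : Fin n → ℝ => y i) :=
  (ContinuousLinearMap.proj i : (Fin n → ℝ) →L[ℝ] ℝ).differentiable

noncomputable def bF (W : Matrix (Fin n) (Fin n) ℝ) (F H : (Fin n → ℝ) → ℝ) (x : Fin n → ℝ) : ℝ :=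
  ∑ i : Fin n, ∑ j : Fin n, W i j * x i * x j * pd F i x * pd H j x

lemma pd_bF (W : Matrix (Fin n) (Fin n) ℝ) {G H : (Fin n → ℝ) → ℝ}
    (hG : ContDiff ℝ (⊤ : ℕ∞) G) (hH : ContDiff ℝ (⊤ : ℕ∞) H) (l : Fin n) (x : Fin n → ℝ) :
    pd (bF W G H) l x =
      (∑ j : Fin n, W l j * x j * pd G l x * pd H j x)
    + (∑ i : Fin n, W i l * x i * pd G i x * pd H l x)
    + ∑ i : Fin n, ∑ j : Fin n, W i j * x i * x j *
        (pd (pd G i) l x * pd H j x + pd G i x * pd (pd H j) l x) := by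
  have hterm : ∀ i j : Fin n, DifferentiableAt ℝ
      (fun y => W i j * y i * y j * pd G i y * pd H j y) x := fun i j =>
    ((((differentiableAt_const _).mul (diff_coord i x)).mul (diff_coord j x)).mul
      (diff_pd hG i x)).mul (diff_pd hH j x)
  have hd : ∀ i j : Fin n,
      fderiv ℝ (fun y => W i j * y i * y j * pd G i y * pd H j y) x (Pi.single l 1)
      = W i j * ((Pi.single l 1 : Fin n → ℝ) i) * x j * pd G i x * pd H j x
      + W i j * x i * ((Pi.single l 1 : Fin n → ℝ) j) * pd G i x * pd H j x
      + W i j * x i * x j *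
          (pd (pd G i) l x * pd H j x + pd G i x * pd (pd H j) l x) := by
    intro i j
    have d1 : DifferentiableAt ℝ (fun y : Fin n → ℝ => W i j * y i) x :=
      (differentiableAt_const _).mul (diff_coord i x)
    have d2 : DifferentiableAt ℝ (fun y : Fin n → ℝ => W i j * y i * y j) x :=
      d1.mul (diff_coord j x)
    have d3 : DifferentiableAt ℝ (fun y : Fin n → ℝ => W i j * y i * y j * pd G i y) x :=
      d2.mul (diff_pd hG i x)
    rw [fderiv_mul_apply' d3 (diff_pd hH j x), fderiv_mul_apply' d2 (diff_pd hG i x),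
      fderiv_mul_apply' d1 (diff_coord j x),
      fderiv_mul_apply' (differentiableAt_const (W i j)) (diff_coord i x)]
    simp only [fderiv_coord, fderiv_const, fderiv_const_apply, Pi.zero_apply, ContinuousLinearMap.zero_apply]
    simp only [pd]
    ring
  have step : pd (bF W G H) l x = ∑ i : Fin n, ∑ j : Fin n,
      (W i j * ((Pi.single l 1 : Fin n → ℝ) i) * x j * pd G i x * pd H j x
      + W i j * x i * ((Pi.single l 1 : Fin n → ℝ) j) * pd G i x * pd H j x
      + W i j * x i * x j *
          (pd (pd G i) l x * pd H j x + pd G i x * pd (pd H j) l x)) := by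
    have : pd (bF W G H) l x
        = fderiv ℝ (fun y => ∑ i : Fin n, ∑ j : Fin n,
            W i j * y i * y j * pd G i y * pd H j y) x (Pi.single l 1) := rfl
    rw [this, fderiv_fun_sum (fun i _ => DifferentiableAt.fun_sum fun j _ => hterm i j),
      ContinuousLinearMap.sum_apply]
    refine Finset.sum_congr rfl fun i _ => ?_
    rw [fderiv_fun_sum (fun j _ => hterm i j), ContinuousLinearMap.sum_apply]
    exact Finset.sum_congr rfl fun j _ => hd i j
  rw [step]
  simp only [Finset.sum_add_distrib]
  congr 1
  · congr 1
    · rw [Finset.sum_comm]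
      simp [Pi.single_apply, ite_mul, mul_ite, mul_zero, zero_mul, mul_one]
    · simp [Pi.single_apply, ite_mul, mul_ite, mul_zero, zero_mul, mul_one]

lemma quadBracket_eq (W : Matrix (Fin n) (Fin n) ℝ) (hW' : ∀ i j, W j i = -W i j)
    (F H : (Fin n → ℝ) → ℝ) : quadBracket W F H = bF W F H := by
  funext x
  unfold quadBracket bF
  set g : Fin n → Fin n → ℝ := fun i j => W i j * x i * x j * pd F i x * pd H j x with hg
  have h1 : ∀ i j : Fin n, g i j = (if i < j then g i j else 0) + (if j < i then g i j else 0)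
      + (if i = j then g i j else 0) := by
    intro i j
    rcases lt_trichotomy i j with h | h | h
    · simp [h, not_lt.mpr h.le, h.ne]
    · simp [h]
    · simp [h, not_lt.mpr h.le, h.ne']
  have hdiag : ∀ i : Fin n, g i i = 0 := by
    intro i
    have : W i i = 0 := by have := hW' i i; linarith
    simp [hg, this]
  calc ∑ i : Fin n, ∑ j : Fin n, (if i < j then W i j * x i * x j *
        (pd F i x * pd H j x - pd F j x * pd H i x) else 0)
      = ∑ i : Fin n, ∑ j : Fin n, ((if i < j then g i j else 0) + (if i < j then g j i else 0)) := by
        refine Finset.sum_congr rfl fun i _ => Finset.sum_congr rfl fun j _ => ?_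
        by_cases h : i < j
        · simp only [h, if_true]
          have := hW' i j
          simp only [hg]
          rw [this]
          ring
        · simp [h]
    _ = (∑ i : Fin n, ∑ j : Fin n, (if i < j then g i j else 0))
        + ∑ i : Fin n, ∑ j : Fin n, (if i < j then g j i else 0) := by
        simp [Finset.sum_add_distrib]
    _ = (∑ i : Fin n, ∑ j : Fin n, (if i < j then g i j else 0))
        + ∑ i : Fin n, ∑ j : Fin n, (if j < i then g i j else 0) := by
        congr 1
        rw [Finset.sum_comm]
    _ = ∑ i : Fin n, ∑ j : Fin n, g i j := by
        rw [← Finset.sum_add_distrib]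
        simp only [← Finset.sum_add_distrib]
        refine Finset.sum_congr rfl fun i _ => Finset.sum_congr rfl fun j _ => ?_
        rcases lt_trichotomy i j with h | h | h
        · simp [h, asymm h]
        · simp [h, hdiag j]
        · simp [h, asymm h]


variable {n : ℕ}

lemma sum3_eq (f : Fin n → Fin n → Fin n → ℝ) :
    ∑ p : Fin n × Fin n × Fin n, f p.1 p.2.1 p.2.2
      = ∑ k : Fin n, ∑ l : Fin n, ∑ m : Fin n, f k l m := by
  rw [Fintype.sum_prod_type]
  exact Finset.sum_congr rfl fun k _ => by rw [Fintype.sum_prod_type]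

lemma sum4_eq (f : Fin n → Fin n → Fin n → Fin n → ℝ) :
    ∑ p : Fin n × Fin n × Fin n × Fin n, f p.1 p.2.1 p.2.2.1 p.2.2.2
      = ∑ k : Fin n, ∑ l : Fin n, ∑ i : Fin n, ∑ j : Fin n, f k l i j := by
  rw [Fintype.sum_prod_type]
  exact Finset.sum_congr rfl fun k _ => sum3_eq (f k)

lemma sum3_rev (f : Fin n → Fin n → Fin n → ℝ) :
    ∑ k : Fin n, ∑ l : Fin n, ∑ m : Fin n, f k l m
      = ∑ k : Fin n, ∑ l : Fin n, ∑ m : Fin n, f m l k := by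
  rw [← sum3_eq f, ← sum3_eq (fun k l m => f m l k)]
  exact Fintype.sum_equiv ⟨fun p => (p.2.2, p.2.1, p.1), fun p => (p.2.2, p.2.1, p.1),
    fun p => rfl, fun p => rfl⟩ _ _ (fun p => rfl)

lemma sum4_rev (f : Fin n → Fin n → Fin n → Fin n → ℝ) :
    ∑ k : Fin n, ∑ l : Fin n, ∑ i : Fin n, ∑ j : Fin n, f k l i j
      = ∑ k : Fin n, ∑ l : Fin n, ∑ i : Fin n, ∑ j : Fin n, f j i l k := by
  rw [← sum4_eq f, ← sum4_eq (fun k l i j => f j i l k)]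
  exact Fintype.sum_equiv ⟨fun p => (p.2.2.2, p.2.2.1, p.2.1, p.1),
    fun p => (p.2.2.2, p.2.2.1, p.2.1, p.1), fun p => rfl, fun p => rfl⟩ _ _ (fun p => rfl)

lemma sum4_swap34 (f : Fin n → Fin n → Fin n → Fin n → ℝ) :
    ∑ k : Fin n, ∑ l : Fin n, ∑ i : Fin n, ∑ j : Fin n, f k l i j
      = ∑ k : Fin n, ∑ l : Fin n, ∑ i : Fin n, ∑ j : Fin n, f k l j i := by
  exact Finset.sum_congr rfl fun k _ => Finset.sum_congr rfl fun l _ => Finset.sum_comm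

section Algebra

variable (W : Matrix (Fin n) (Fin n) ℝ) (x : Fin n → ℝ)

def T3 (a b c : Fin n → ℝ) : ℝ :=
  ∑ k : Fin n, ∑ l : Fin n, ∑ m : Fin n,
    W k l * W l m * x k * x l * x m * a k * b l * c m

def P4 (a : Fin n → ℝ) (B : Fin n → Fin n → ℝ) (c : Fin n → ℝ) : ℝ :=
  ∑ k : Fin n, ∑ l : Fin n, ∑ i : Fin n, ∑ j : Fin n,
    W k l * x k * x l * (W i j * x i * x j) * a k * B i l * c j

variable {W x}

lemma T3_symm (hW' : ∀ i j, W j i = -W i j) (a b c : Fin n → ℝ) :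
    T3 W x a b c = T3 W x c b a := by
  unfold T3
  rw [sum3_rev]
  refine Finset.sum_congr rfl fun k _ => Finset.sum_congr rfl fun l _ =>
    Finset.sum_congr rfl fun m _ => ?_
  rw [hW' l m, hW' k l]
  ring

lemma P4_symm (hW' : ∀ i j, W j i = -W i j) (a c : Fin n → ℝ) {B : Fin n → Fin n → ℝ}
    (hB : ∀ i j, B i j = B j i) :
    P4 W x a B c = P4 W x c B a := by
  unfold P4
  rw [sum4_rev]
  refine Finset.sum_congr rfl fun k _ => Finset.sum_congr rfl fun l _ =>
    Finset.sum_congr rfl fun i _ => Finset.sum_congr rfl fun j _ => ?_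
  rw [hW' i j, hW' k l, hB l i]
  ring

/-- The expansion of one cyclic term. -/
lemma E_eq (hW' : ∀ i j, W j i = -W i j) (a b c : Fin n → ℝ) (B C : Fin n → Fin n → ℝ) :
    (∑ k : Fin n, ∑ l : Fin n, W k l * x k * x l * a k *
      ((∑ j : Fin n, W l j * x j * b l * c j)
        + (∑ i : Fin n, W i l * x i * b i * c l)
        + ∑ i : Fin n, ∑ j : Fin n, W i j * x i * x j * (B i l * c j + b i * C j l)))
    = T3 W x a b c - T3 W x a c b + P4 W x a B c - P4 W x a C b := by
  have expand : ∀ k l : Fin n, W k l * x k * x l * a k *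
      ((∑ j : Fin n, W l j * x j * b l * c j)
        + (∑ i : Fin n, W i l * x i * b i * c l)
        + ∑ i : Fin n, ∑ j : Fin n, W i j * x i * x j * (B i l * c j + b i * C j l))
      = (∑ j : Fin n, W k l * x k * x l * a k * (W l j * x j * b l * c j))
      + (∑ i : Fin n, W k l * x k * x l * a k * (W i l * x i * b i * c l))
      + ((∑ i : Fin n, ∑ j : Fin n,
            W k l * x k * x l * a k * (W i j * x i * x j * (B i l * c j)))
        + ∑ i : Fin n, ∑ j : Fin n,
            W k l * x k * x l * a k * (W i j * x i * x j * (b i * C j l))) := by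
    intro k l
    rw [mul_add, mul_add, ← Finset.mul_sum, ← Finset.mul_sum]
    congr 1
    calc W k l * x k * x l * a k *
          (∑ i : Fin n, ∑ j : Fin n, W i j * x i * x j * (B i l * c j + b i * C j l))
        = ∑ i : Fin n, ∑ j : Fin n, (W k l * x k * x l * a k * (W i j * x i * x j * (B i l * c j))
            + W k l * x k * x l * a k * (W i j * x i * x j * (b i * C j l))) := by
          rw [Finset.mul_sum]
          refine Finset.sum_congr rfl fun i _ => ?_
          rw [Finset.mul_sum]
          refine Finset.sum_congr rfl fun j _ => ?_
          ring
      _ = _ := by simp only [Finset.sum_add_distrib]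
  calc (∑ k : Fin n, ∑ l : Fin n, W k l * x k * x l * a k *
      ((∑ j : Fin n, W l j * x j * b l * c j)
        + (∑ i : Fin n, W i l * x i * b i * c l)
        + ∑ i : Fin n, ∑ j : Fin n, W i j * x i * x j * (B i l * c j + b i * C j l)))
      = (∑ k : Fin n, ∑ l : Fin n, ∑ j : Fin n,
            W k l * x k * x l * a k * (W l j * x j * b l * c j))
      + (∑ k : Fin n, ∑ l : Fin n, ∑ i : Fin n,
            W k l * x k * x l * a k * (W i l * x i * b i * c l))
      + ((∑ k : Fin n, ∑ l : Fin n, ∑ i : Fin n, ∑ j : Fin n,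
            W k l * x k * x l * a k * (W i j * x i * x j * (B i l * c j)))
        + ∑ k : Fin n, ∑ l : Fin n, ∑ i : Fin n, ∑ j : Fin n,
            W k l * x k * x l * a k * (W i j * x i * x j * (b i * C j l))) := by
        simp only [expand, Finset.sum_add_distrib]
    _ = T3 W x a b c - T3 W x a c b + P4 W x a B c - P4 W x a C b := by
        have e1 : (∑ k : Fin n, ∑ l : Fin n, ∑ j : Fin n,
            W k l * x k * x l * a k * (W l j * x j * b l * c j)) = T3 W x a b c := by
          unfold T3
          exact Finset.sum_congr rfl fun k _ => Finset.sum_congr rfl fun l _ =>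
            Finset.sum_congr rfl fun m _ => by ring
        have e2 : (∑ k : Fin n, ∑ l : Fin n, ∑ i : Fin n,
            W k l * x k * x l * a k * (W i l * x i * b i * c l)) = -T3 W x a c b := by
          unfold T3
          rw [← Finset.sum_neg_distrib]
          refine Finset.sum_congr rfl fun k _ => ?_
          rw [← Finset.sum_neg_distrib]
          refine Finset.sum_congr rfl fun l _ => ?_
          rw [← Finset.sum_neg_distrib]
          refine Finset.sum_congr rfl fun i _ => ?_
          rw [hW' l i]
          ring
        have e3 : (∑ k : Fin n, ∑ l : Fin n, ∑ i : Fin n, ∑ j : Fin n,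
            W k l * x k * x l * a k * (W i j * x i * x j * (B i l * c j))) = P4 W x a B c := by
          unfold P4
          exact Finset.sum_congr rfl fun k _ => Finset.sum_congr rfl fun l _ =>
            Finset.sum_congr rfl fun i _ => Finset.sum_congr rfl fun j _ => by ring
        have e4 : (∑ k : Fin n, ∑ l : Fin n, ∑ i : Fin n, ∑ j : Fin n,
            W k l * x k * x l * a k * (W i j * x i * x j * (b i * C j l))) = -P4 W x a C b := by
          unfold P4
          rw [sum4_swap34]
          rw [← Finset.sum_neg_distrib]
          refine Finset.sum_congr rfl fun k _ => ?_
          rw [← Finset.sum_neg_distrib]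
          refine Finset.sum_congr rfl fun l _ => ?_
          rw [← Finset.sum_neg_distrib]
          refine Finset.sum_congr rfl fun i _ => ?_
          rw [← Finset.sum_neg_distrib]
          refine Finset.sum_congr rfl fun j _ => ?_
          rw [hW' i j]
          ring
        rw [e1, e2, e3, e4]
        ring

lemma key (hW' : ∀ i j, W j i = -W i j) (a b c : Fin n → ℝ) (A B C : Fin n → Fin n → ℝ)
    (hA : ∀ i j, A i j = A j i) (hB : ∀ i j, B i j = B j i) (hC : ∀ i j, C i j = C j i) :
    (∑ k : Fin n, ∑ l : Fin n, W k l * x k * x l * a k *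
      ((∑ j : Fin n, W l j * x j * b l * c j)
        + (∑ i : Fin n, W i l * x i * b i * c l)
        + ∑ i : Fin n, ∑ j : Fin n, W i j * x i * x j * (B i l * c j + b i * C j l)))
    + (∑ k : Fin n, ∑ l : Fin n, W k l * x k * x l * b k *
      ((∑ j : Fin n, W l j * x j * c l * a j)
        + (∑ i : Fin n, W i l * x i * c i * a l)
        + ∑ i : Fin n, ∑ j : Fin n, W i j * x i * x j * (C i l * a j + c i * A j l)))
    + (∑ k : Fin n, ∑ l : Fin n, W k l * x k * x l * c k *
      ((∑ j : Fin n, W l j * x j * a l * b j)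
        + (∑ i : Fin n, W i l * x i * a i * b l)
        + ∑ i : Fin n, ∑ j : Fin n, W i j * x i * x j * (A i l * b j + a i * B j l)))
    = 0 := by
  rw [E_eq hW' a b c B C, E_eq hW' b c a C A, E_eq hW' c a b A B]
  rw [T3_symm hW' a c b, T3_symm hW' b a c, T3_symm hW' c b a,
    P4_symm hW' a b hC, P4_symm hW' b c hA, P4_symm hW' c a hB]
  ring

end Algebra

end QuadJacobi

open QuadJacobi in
/-- The quadratic bracket satisfies the Jacobi identity. -/
theorem quadBracket_jacobi {n : ℕ}
    (W : Matrix (Fin n) (Fin n) ℝ) (hW : Wᵀ = -W)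
    (F G H : (Fin n → ℝ) → ℝ)
    (hF : ContDiff ℝ (⊤ : ℕ∞) F) (hG : ContDiff ℝ (⊤ : ℕ∞) G) (hH : ContDiff ℝ (⊤ : ℕ∞) H) :
    ∀ x, quadBracket W F (quadBracket W G H) x
        + quadBracket W G (quadBracket W H F) x
        + quadBracket W H (quadBracket W F G) x = 0 := by
  intro x
  have hW' : ∀ i j, W j i = -W i j := fun i j => by
    have := congrFun (congrFun hW i) j
    simpa [Matrix.transpose_apply] using this
  rw [quadBracket_eq W hW' G H, quadBracket_eq W hW' H F, quadBracket_eq W hW' F G,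
    quadBracket_eq W hW' F (bF W G H), quadBracket_eq W hW' G (bF W H F),
    quadBracket_eq W hW' H (bF W F G)]
  simp only [bF]
  simp only [pd_bF W hG hH, pd_bF W hH hF, pd_bF W hF hG]
  exact key (x := x) hW' (fun k => pd F k x) (fun k => pd G k x) (fun k => pd H k x)
    (fun i l => pd (pd F i) l x) (fun i l => pd (pd G i) l x) (fun i l => pd (pd H i) l x)
    (fun i j => pd_symm hF i j x) (fun i j => pd_symm hG i j x) (fun i j => pd_symm hH i j x)
end

section
/- On the interior of the simplex in ℝⁿ with skew-symmetric W, the replicator equation ẋᵢ = xᵢ[(Wx)ᵢ − xᵀWx] coincides with the Hamiltonian flow of H(x) = x₁ + ⋯ + xₙ under the quadratic Poisson bracket {F,G}_W, restricted to the invariant set {x : Σᵢ xᵢ = 1}; more precisely, for any smooth F, the derivative of F along solutions with Σxᵢ(0)=1 equals {F, H}_W evaluated along the solution. -/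
open Matrix

private lemma sum_split_lt {n : ℕ} (c : Fin n → Fin n → ℝ) (hdiag : ∀ i, c i i = 0) :
    ∑ i, ∑ j, c i j = ∑ i, ∑ j, if i < j then c i j + c j i else 0 := by
  have h1 : ∑ i, ∑ j, (if i < j then c i j + c j i else 0)
      = (∑ i, ∑ j, if i < j then c i j else 0) + ∑ i, ∑ j, if i < j then c j i else 0 := by
    rw [← Finset.sum_add_distrib]
    refine Finset.sum_congr rfl fun i _ => ?_
    rw [← Finset.sum_add_distrib]
    refine Finset.sum_congr rfl fun j _ => ?_
    split <;> simp
  have h2 : (∑ i, ∑ j, if i < j then c j i else 0) = ∑ i, ∑ j, if j < i then c i j else 0 :=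
    Finset.sum_comm
  rw [h1, h2, ← Finset.sum_add_distrib]
  refine (Finset.sum_congr rfl fun i _ => ?_).symm
  rw [← Finset.sum_add_distrib]
  refine Finset.sum_congr rfl fun j _ => ?_
  rcases lt_trichotomy i j with h | h | h
  · simp [h, not_lt.2 h.le]
  · simp [h, hdiag]
  · simp [h, not_lt.2 h.le]

/-- On the invariant simplex, the replicator equation is the Hamiltonian flow of
`H(x) = x₁ + ⋯ + xₙ` for the quadratic bracket: for any smooth `F`, the derivative
of `F` along solutions with `∑ xᵢ(0) = 1` equals `{F, H}_W` along the solution. -/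
theorem replicator_hamiltonian_flow {n : ℕ}
    (W : Matrix (Fin n) (Fin n) ℝ) (hW : Wᵀ = -W)
    (x : ℝ → Fin n → ℝ)
    (hx : ∀ t i, HasDerivAt (fun s => x s i)
      (x t i * ((W.mulVec (x t)) i - x t ⬝ᵥ W.mulVec (x t))) t)
    (hinit : ∑ i, x 0 i = 1)
    (F : (Fin n → ℝ) → ℝ) (hF : ContDiff ℝ (⊤ : ℕ∞) F) :
    ∀ t, HasDerivAt (fun s => F (x s))
      (quadBracket W F (fun y => ∑ i, y i) (x t)) t := by
  -- skew-symmetry facts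
  have hWa : ∀ i j, W j i = - W i j := by
    intro i j
    have := congrFun (congrFun hW i) j
    simpa [Matrix.transpose_apply] using this
  have hWd : ∀ i, W i i = 0 := by
    intro i; have := hWa i i; linarith
  have hq : ∀ v : Fin n → ℝ, v ⬝ᵥ W.mulVec v = 0 := by
    intro v
    have h1 : v ⬝ᵥ W.mulVec v = ∑ i, ∑ j, v i * (W i j * v j) := by
      simp [dotProduct, Matrix.mulVec, Finset.mul_sum]
    have h2 : v ⬝ᵥ W.mulVec v = -(v ⬝ᵥ W.mulVec v) := by
      nth_rewrite 1 [h1]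
      rw [Finset.sum_comm]
      rw [h1, ← Finset.sum_neg_distrib]
      refine Finset.sum_congr rfl fun j _ => ?_
      rw [← Finset.sum_neg_distrib]
      refine Finset.sum_congr rfl fun i _ => ?_
      rw [hWa i j]; ring
    linarith
  intro t
  -- derivative of x as a curve
  have hxv : HasDerivAt x (fun i => x t i * (W.mulVec (x t)) i) t := by
    rw [hasDerivAt_pi]
    intro i
    have := hx t i
    simpa [hq (x t)] using this
  -- fderiv of F
  have hFd : HasFDerivAt F (fderiv ℝ F (x t)) (x t) :=
    (hF.differentiable (by simp) (x t)).hasFDerivAt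
  have hcomp := hFd.comp_hasDerivAt t hxv
  -- fderiv of H
  have hH : ∀ z : Fin n → ℝ, HasFDerivAt (fun y : Fin n → ℝ => ∑ i, y i)
      (∑ i : Fin n, ContinuousLinearMap.proj (R := ℝ) (φ := fun _ : Fin n => ℝ) i) z := by
    intro z
    exact HasFDerivAt.fun_sum fun i _ =>
      (ContinuousLinearMap.proj (R := ℝ) (φ := fun _ : Fin n => ℝ) i).hasFDerivAt
  have hHval : ∀ (j : Fin n),
      fderiv ℝ (fun y : Fin n → ℝ => ∑ i, y i) (x t) (Pi.single j 1) = 1 := by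
    intro j
    rw [(hH (x t)).fderiv]
    simp [ContinuousLinearMap.proj, Pi.single_apply]
  -- compute the derivative value
  refine hcomp.congr_deriv ?_
  symm
  set L := fderiv ℝ F (x t) with hL
  have hv : (fun i => x t i * (W.mulVec (x t)) i)
      = ∑ i : Fin n, (x t i * (W.mulVec (x t)) i) • (Pi.single i 1 : Fin n → ℝ) := by
    funext k
    rw [Finset.sum_apply]
    simp [Pi.single_apply, Finset.sum_ite_eq', mul_comm]
  rw [hv, map_sum]
  have : ∀ i, L ((x t i * (W.mulVec (x t)) i) • (Pi.single i 1 : Fin n → ℝ))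
      = (x t i * (W.mulVec (x t)) i) * L (Pi.single i 1) := by
    intro i; rw [ContinuousLinearMap.map_smul]; rfl
  simp_rw [this]
  -- the combinatorial identity
  unfold quadBracket
  simp_rw [hHval]
  have key := sum_split_lt (fun i j => W i j * x t i * x t j * L (Pi.single i 1))
    (fun i => by simp [hWd i])
  have lhs_eq : ∑ i, (x t i * (W.mulVec (x t)) i) * L (Pi.single i 1)
      = ∑ i, ∑ j, W i j * x t i * x t j * L (Pi.single i 1) := by
    refine Finset.sum_congr rfl fun i _ => ?_
    rw [Matrix.mulVec, dotProduct, Finset.mul_sum, Finset.sum_mul]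
    refine Finset.sum_congr rfl fun j _ => ?_
    ring
  rw [← lhs_eq] at key
  beta_reduce at key
  rw [key]
  refine Finset.sum_congr rfl fun i _ => Finset.sum_congr rfl fun j _ => ?_
  split
  · rw [hWa i j]; ring
  · rfl
end

section
/- For the 5-dimensional embedded-tournament replicator system ẋ₁ = x₁(x₃−x₂−x₄+x₅), ẋ₂ = x₂(x₁−x₃−x₄+x₅), ẋ₃ = x₃(x₂−x₁−x₄+x₅), ẋ₄ = x₄(x₁+x₂+x₃−x₅), ẋ₅ = x₅(x₄−x₁−x₂−x₃), the quantity C₃ = (x₁+x₂+x₃)x₄x₅ is conserved along solutions. -/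
/-- For the 5-dimensional embedded-tournament replicator system,
`C₃ = (x₁+x₂+x₃)x₄x₅` is conserved. -/
theorem embedded5_C3_conserved (x₁ x₂ x₃ x₄ x₅ : ℝ → ℝ)
    (h₁ : ∀ t, HasDerivAt x₁ (x₁ t * (x₃ t - x₂ t - x₄ t + x₅ t)) t)
    (h₂ : ∀ t, HasDerivAt x₂ (x₂ t * (x₁ t - x₃ t - x₄ t + x₅ t)) t)
    (h₃ : ∀ t, HasDerivAt x₃ (x₃ t * (x₂ t - x₁ t - x₄ t + x₅ t)) t)
    (h₄ : ∀ t, HasDerivAt x₄ (x₄ t * (x₁ t + x₂ t + x₃ t - x₅ t)) t)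
    (h₅ : ∀ t, HasDerivAt x₅ (x₅ t * (x₄ t - x₁ t - x₂ t - x₃ t)) t) :
    ∀ t, HasDerivAt (fun s => (x₁ s + x₂ s + x₃ s) * x₄ s * x₅ s) 0 t := by
  intro t
  -- The rock-paper-scissors terms among x₁, x₂, x₃ cancel in the sum, so S = x₁ + x₂ + x₃
  -- has logarithmic derivative x₅ - x₄; those of x₄ and x₅ are S - x₅ and x₄ - S.
  have hS : HasDerivAt (fun s => x₁ s + x₂ s + x₃ s) ((x₁ t + x₂ t + x₃ t) * (x₅ t - x₄ t)) t :=
    (((h₁ t).add (h₂ t)).add (h₃ t)).congr_deriv (by ring)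
  exact ((hS.mul (h₄ t)).mul (h₅ t)).congr_deriv (by simp only [Pi.mul_apply]; ring)
end

section
/- For the 5-dimensional embedded-tournament replicator system ẋ₁ = x₁(x₃−x₂−x₄+x₅), ẋ₂ = x₂(x₁−x₃−x₄+x₅), ẋ₃ = x₃(x₂−x₁−x₄+x₅), ẋ₄ = x₄(x₁+x₂+x₃−x₅), ẋ₅ = x₅(x₄−x₁−x₂−x₃), the quantity C₉ = x₁x₂x₃·x₄³·x₅³ is conserved along solutions. -/
/-!
Each equation has the form `ẋᵢ = xᵢ · rᵢ` with `rᵢ` linear in `x`, so the monomial `C₉` satisfies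
`Ċ₉ = C₉ · (r₁ + r₂ + r₃ + 3 r₄ + 3 r₅)`, and this weighted sum of the rates vanishes identically.
Differentiating the product directly instead of `log C₉` needs no positivity of the coordinates.
-/

section RelativeRate

variable {u v : ℝ → ℝ} {a b t : ℝ}

theorem HasDerivAt.mul_of_relative_rate (hu : HasDerivAt u (u t * a) t)
    (hv : HasDerivAt v (v t * b) t) :
    HasDerivAt (fun s => u s * v s) (u t * v t * (a + b)) t := by
  refine (hu.mul hv).congr_deriv ?_
  ring

theorem HasDerivAt.pow_of_relative_rate (hu : HasDerivAt u (u t * a) t) (n : ℕ) :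
    HasDerivAt (fun s => u s ^ n) (u t ^ n * (n * a)) t := by
  refine (hu.fun_pow n).congr_deriv ?_
  rcases n with _ | n
  · simp
  · rw [Nat.add_sub_cancel, pow_succ]
    push_cast
    ring

end RelativeRate

/-- For the 5-dimensional embedded-tournament replicator system,
`C₉ = x₁x₂x₃·x₄³·x₅³` is conserved. -/
theorem embedded5_C9_conserved (x₁ x₂ x₃ x₄ x₅ : ℝ → ℝ)
    (h₁ : ∀ t, HasDerivAt x₁ (x₁ t * (x₃ t - x₂ t - x₄ t + x₅ t)) t)
    (h₂ : ∀ t, HasDerivAt x₂ (x₂ t * (x₁ t - x₃ t - x₄ t + x₅ t)) t)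
    (h₃ : ∀ t, HasDerivAt x₃ (x₃ t * (x₂ t - x₁ t - x₄ t + x₅ t)) t)
    (h₄ : ∀ t, HasDerivAt x₄ (x₄ t * (x₁ t + x₂ t + x₃ t - x₅ t)) t)
    (h₅ : ∀ t, HasDerivAt x₅ (x₅ t * (x₄ t - x₁ t - x₂ t - x₃ t)) t) :
    ∀ t, HasDerivAt (fun s => x₁ s * x₂ s * x₃ s * (x₄ s) ^ 3 * (x₅ s) ^ 3) 0 t := by
  intro t
  have hC := ((((h₁ t).mul_of_relative_rate (h₂ t)).mul_of_relative_rate (h₃ t)).mul_of_relative_rate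
    ((h₄ t).pow_of_relative_rate 3)).mul_of_relative_rate ((h₅ t).pow_of_relative_rate 3)
  have hrate : (x₃ t - x₂ t - x₄ t + x₅ t) + (x₁ t - x₃ t - x₄ t + x₅ t)
      + (x₂ t - x₁ t - x₄ t + x₅ t) + ((3 : ℕ) * (x₁ t + x₂ t + x₃ t - x₅ t))
      + ((3 : ℕ) * (x₄ t - x₁ t - x₂ t - x₃ t)) = 0 := by
    push_cast
    ring
  rwa [hrate, mul_zero] at hC
end

section
/- For the quadratic Poisson bracket {F,H}_W with any skew-symmetric n×n matrix W, the product F_n = x₁x₂⋯xₙ is a Casimir when W is the adjacency matrix of a tournament on n vertices in which every vertex has equal in-degree and out-degree; specifically, for W a circulant tournament adjacency matrix on 2n+1 vertices, {x₁⋯x_{2n+1}, H}_W = 0 for every smooth H. -/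
open Matrix

/-- Directional derivative of the product of coordinates. -/
theorem fderiv_prod_single' (m : ℕ) (x : Fin m → ℝ) (i : Fin m) :
    fderiv ℝ (fun y : Fin m → ℝ => ∏ k, y k) x (Pi.single i (1:ℝ))
      = ∏ k ∈ Finset.univ.erase i, x k := by
  have h := (hasFDerivAt_finset_prod (𝕜 := ℝ) (u := (Finset.univ : Finset (Fin m))) (x := x)).fderiv
  rw [show (fun y : Fin m → ℝ => ∏ k, y k) = (∏ i ∈ Finset.univ, · i) from rfl, h]
  simp [Pi.single_apply, Finset.sum_ite_eq']

/-- Each row of the circulant tournament matrix sums to zero. -/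
theorem rowsum_zero' (n : ℕ) (i : Fin (2*n+1)) :
    ∑ j : Fin (2*n+1), (if i = j then (0:ℝ)
      else if (((j.val : ZMod (2*n+1)) - (i.val : ZMod (2*n+1))).val ≤ n) then -1 else 1) = 0 := by
  haveI : NeZero (2*n+1) := ⟨by omega⟩
  have step1 : ∑ j : Fin (2*n+1), (if i = j then (0:ℝ)
      else if (((j.val : ZMod (2*n+1)) - (i.val : ZMod (2*n+1))).val ≤ n) then -1 else 1)
      = ∑ d : ZMod (2*n+1),
          (if d.val = 0 then (0:ℝ) else if d.val ≤ n then -1 else 1) := by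
    have hbij : Function.Bijective
        (fun j : Fin (2*n+1) => ((j.val : ZMod (2*n+1)) - (i.val : ZMod (2*n+1)))) := by
      rw [Fintype.bijective_iff_injective_and_card]
      constructor
      · intro a b hab
        simp only [sub_left_inj] at hab
        have : ((a.val : ZMod (2*n+1))).val = ((b.val : ZMod (2*n+1))).val := by rw [hab]
        rw [ZMod.val_cast_of_lt a.isLt, ZMod.val_cast_of_lt b.isLt] at this
        exact Fin.ext this
      · simp [ZMod.card]
    refine Fintype.sum_bijective _ hbij _ _ (fun j => ?_)
    have heq : (i = j) ↔ ((j.val : ZMod (2*n+1)) - (i.val : ZMod (2*n+1)) = 0) := by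
      rw [sub_eq_zero]
      constructor
      · rintro rfl; rfl
      · intro h
        have : ((j.val : ZMod (2*n+1))).val = ((i.val : ZMod (2*n+1))).val := by rw [h]
        rw [ZMod.val_cast_of_lt j.isLt, ZMod.val_cast_of_lt i.isLt] at this
        exact (Fin.ext this).symm
    by_cases h : i = j
    · subst h
      simp
    · have h2 : ¬ ((i.val : ZMod (2*n+1)) = (j.val : ZMod (2*n+1))) := by
        intro hc; exact h (heq.mpr (sub_eq_zero.mpr hc.symm))
      have h3 : ((j.val : ZMod (2*n+1)) - (i.val : ZMod (2*n+1))).val ≠ 0 := by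
        rw [Ne, ZMod.val_eq_zero, sub_eq_zero]
        intro hc; exact h2 hc.symm
      simp [h, h3]
  have step2 : ∑ d : ZMod (2*n+1), (if d.val = 0 then (0:ℝ) else if d.val ≤ n then -1 else 1)
      = ∑ v ∈ Finset.range (2*n+1), (if v = 0 then (0:ℝ) else if v ≤ n then -1 else 1) := by
    refine Finset.sum_bij (fun d _ => d.val) (fun d _ => Finset.mem_range.mpr (ZMod.val_lt d))
      (fun a _ b _ h => ZMod.val_injective _ h) (fun v hv => ?_) (fun _ _ => rfl)
    exact ⟨(v : ZMod (2*n+1)), Finset.mem_univ _, ZMod.val_cast_of_lt (Finset.mem_range.mp hv)⟩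
  have step3 : ∑ v ∈ Finset.range (2*n+1),
      (if v = 0 then (0:ℝ) else if v ≤ n then -1 else 1) = 0 := by
    set g : ℕ → ℝ := fun v => if v = 0 then 0 else if v ≤ n then -1 else 1 with hg
    rw [Finset.range_eq_Ico,
      ← Finset.sum_Ico_consecutive g (Nat.zero_le (n+1)) (by omega : n+1 ≤ 2*n+1),
      ← Finset.sum_Ico_consecutive g (Nat.zero_le 1) (by omega : 1 ≤ n+1)]
    have hA : ∑ v ∈ Finset.Ico 0 1, g v = 0 := by simp [hg]
    have hB : ∑ v ∈ Finset.Ico 1 (n+1), g v = -(n:ℝ) := by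
      have hc : ∀ v ∈ Finset.Ico 1 (n+1), g v = -1 := by
        intro v hv
        rw [Finset.mem_Ico] at hv
        simp only [hg]
        rw [if_neg (by omega), if_pos (by omega)]
      rw [Finset.sum_congr rfl hc, Finset.sum_const, Nat.card_Ico]
      simp
    have hC : ∑ v ∈ Finset.Ico (n+1) (2*n+1), g v = (n:ℝ) := by
      have hc : ∀ v ∈ Finset.Ico (n+1) (2*n+1), g v = 1 := by
        intro v hv
        rw [Finset.mem_Ico] at hv
        simp only [hg]
        rw [if_neg (by omega), if_neg (by omega)]
      rw [Finset.sum_congr rfl hc, Finset.sum_const, Nat.card_Ico,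
        (by omega : 2*n+1-(n+1) = n)]
      simp
    rw [hA, hB, hC]; ring
  rw [step1, step2, step3]

/-- The circulant tournament matrix is skew-symmetric. -/
theorem skew_aux' (n : ℕ)
    (W : Matrix (Fin (2 * n + 1)) (Fin (2 * n + 1)) ℝ)
    (hW : ∀ i j : Fin (2 * n + 1), W i j =
      if i = j then 0
      else if (((j.val : ZMod (2 * n + 1)) - (i.val : ZMod (2 * n + 1))).val ≤ n)
        then -1 else 1) :
    ∀ i j, W j i = - W i j := by
  haveI : NeZero (2*n+1) := ⟨by omega⟩
  intro i j
  rw [hW i j, hW j i]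
  by_cases h : i = j
  · simp [h]
  · rw [if_neg (fun hc => h hc.symm), if_neg h]
    have hne : (j.val : ZMod (2*n+1)) - (i.val : ZMod (2*n+1)) ≠ 0 := by
      rw [Ne, sub_eq_zero]
      intro hc
      have : ((j.val : ZMod (2*n+1))).val = ((i.val : ZMod (2*n+1))).val := by rw [hc]
      rw [ZMod.val_cast_of_lt j.isLt, ZMod.val_cast_of_lt i.isLt] at this
      exact h (Fin.ext this).symm
    have hnegval : ((i.val : ZMod (2*n+1)) - (j.val : ZMod (2*n+1))).val
        = 2*n+1 - ((j.val : ZMod (2*n+1)) - (i.val : ZMod (2*n+1))).val := by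
      rw [show (i.val : ZMod (2*n+1)) - (j.val : ZMod (2*n+1))
          = -((j.val : ZMod (2*n+1)) - (i.val : ZMod (2*n+1))) by ring,
        ZMod.neg_val, if_neg hne]
    have hlt := ZMod.val_lt ((j.val : ZMod (2*n+1)) - (i.val : ZMod (2*n+1)))
    have hne0 : ((j.val : ZMod (2*n+1)) - (i.val : ZMod (2*n+1))).val ≠ 0 := by
      rw [Ne, ZMod.val_eq_zero]; exact hne
    by_cases hle : ((j.val : ZMod (2*n+1)) - (i.val : ZMod (2*n+1))).val ≤ n
    · rw [if_pos hle, if_neg (by omega)]; norm_num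
    · rw [if_neg hle, if_pos (by omega)]

/-- Abstract version: the product of coordinates is a Casimir for any
skew-symmetric matrix with vanishing row sums. -/
theorem main_aux (n : ℕ)
    (W : Matrix (Fin (2 * n + 1)) (Fin (2 * n + 1)) ℝ)
    (hskew : ∀ i j, W j i = - W i j)
    (hrow : ∀ i, ∑ j, W i j = 0) :
    ∀ H : (Fin (2 * n + 1) → ℝ) → ℝ,
      ∀ x : Fin (2*n+1) → ℝ,
      (∑ i : Fin (2*n+1), ∑ j : Fin (2*n+1), if i < j then
        W i j * x i * x j *
          (fderiv ℝ (fun y => ∏ i, y i) x (Pi.single i 1) * fderiv ℝ H x (Pi.single j 1) -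
           fderiv ℝ (fun y => ∏ i, y i) x (Pi.single j 1) * fderiv ℝ H x (Pi.single i 1))
      else 0) = 0 := by
  intro H x
  set E : Fin (2*n+1) → ℝ := fun i => fderiv ℝ H x (Pi.single i (1:ℝ)) with hE
  set a : Fin (2*n+1) → ℝ := fun j => (∏ k, x k) * x j * E j with ha
  set g : Fin (2*n+1) → Fin (2*n+1) → ℝ := fun i j => W i j * (a j - a i) with hGg
  have hcol : ∀ j, ∑ i, W i j = 0 := by
    intro j
    have : ∑ i, W i j = ∑ i, -(W j i) := Finset.sum_congr rfl (fun i _ => by rw [hskew j i])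
    rw [this, Finset.sum_neg_distrib, hrow j, neg_zero]
  have hgsymm : ∀ i j, g j i = g i j := by
    intro i j
    simp only [hGg, hskew i j]
    ring
  have hterm : ∀ i j : Fin (2*n+1),
      (if i < j then W i j * x i * x j *
        (fderiv ℝ (fun y => ∏ i, y i) x (Pi.single i 1) * fderiv ℝ H x (Pi.single j 1) -
         fderiv ℝ (fun y => ∏ i, y i) x (Pi.single j 1) * fderiv ℝ H x (Pi.single i 1))
       else 0) = (if i < j then g i j else 0) := by
    intro i j
    by_cases h : i < j
    · rw [if_pos h, if_pos h, fderiv_prod_single' _ x i, fderiv_prod_single' _ x j]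
      have h1 := Finset.mul_prod_erase Finset.univ x (Finset.mem_univ i)
      have h2 := Finset.mul_prod_erase Finset.univ x (Finset.mem_univ j)
      simp only [hGg, ha, hE]
      linear_combination (W i j * x j * fderiv ℝ H x (Pi.single j 1)) * h1
        - (W i j * x i * fderiv ℝ H x (Pi.single i 1)) * h2
    · rw [if_neg h, if_neg h]
  rw [Finset.sum_congr rfl (fun i _ => Finset.sum_congr rfl (fun j _ => hterm i j))]
  have key : ∑ i, ∑ j, g i j = 0 := by
    have h1 : ∀ i, ∑ j, g i j = (∑ j, W i j * a j) - (∑ j, W i j) * a i := by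
      intro i
      rw [Finset.sum_mul, ← Finset.sum_sub_distrib]
      exact Finset.sum_congr rfl (fun j _ => by simp only [hGg]; ring)
    rw [Finset.sum_congr rfl (fun i _ => h1 i)]
    rw [Finset.sum_sub_distrib]
    have h2 : ∑ i, (∑ j, W i j) * a i = 0 := by
      rw [Finset.sum_congr rfl (fun i _ => by rw [hrow i, zero_mul]), Finset.sum_const,
        smul_zero]
    have h3 : ∑ i : Fin (2*n+1), ∑ j, W i j * a j = 0 := by
      rw [Finset.sum_comm]
      rw [Finset.sum_congr rfl (fun j _ => by rw [← Finset.sum_mul, hcol j, zero_mul]),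
        Finset.sum_const, smul_zero]
    rw [h2, h3, sub_zero]
  have hdecomp : ∀ i j : Fin (2*n+1), g i j
      = (if i < j then g i j else 0) + (if j < i then g i j else 0) := by
    intro i j
    rcases lt_trichotomy i j with h | h | h
    · rw [if_pos h, if_neg (asymm h), add_zero]
    · subst h
      simp [hGg]
    · rw [if_neg (asymm h), if_pos h, zero_add]
  have hswap : (∑ i : Fin (2*n+1), ∑ j, if j < i then g i j else 0)
      = (∑ i : Fin (2*n+1), ∑ j, if i < j then g i j else 0) := by
    rw [Finset.sum_comm]
    exact Finset.sum_congr rfl (fun i _ => Finset.sum_congr rfl (fun j _ => by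
      by_cases h : i < j
      · rw [if_pos h, if_pos h, hgsymm]
      · rw [if_neg h, if_neg h]))
  have : (∑ i : Fin (2*n+1), ∑ j, g i j)
      = (∑ i : Fin (2*n+1), ∑ j, if i < j then g i j else 0)
        + (∑ i : Fin (2*n+1), ∑ j, if j < i then g i j else 0) := by
    rw [← Finset.sum_add_distrib]
    refine Finset.sum_congr rfl (fun i _ => ?_)
    rw [← Finset.sum_add_distrib]
    exact Finset.sum_congr rfl (fun j _ => hdecomp i j)
  rw [key, hswap] at this
  linarith

/-- For `W` the adjacency matrix of a circulant tournament on `2n+1` vertices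
(`W i j = -1` if `j - i ≡ k (mod 2n+1)` for some `k ∈ {1,…,n}`, `+1` if
`j - i ≡ -k`, and `0` on the diagonal), the product `x₁⋯x_{2n+1}` is a
Casimir of the quadratic bracket: `{x₁⋯x_{2n+1}, H}_W = 0` for every smooth `H`. -/
theorem product_is_casimir_circulant (n : ℕ)
    (W : Matrix (Fin (2 * n + 1)) (Fin (2 * n + 1)) ℝ)
    (hW : ∀ i j : Fin (2 * n + 1), W i j =
      if i = j then 0
      else if (((j.val : ZMod (2 * n + 1)) - (i.val : ZMod (2 * n + 1))).val ≤ n)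
        then -1 else 1) :
    ∀ H : (Fin (2 * n + 1) → ℝ) → ℝ, ContDiff ℝ (⊤ : ℕ∞) H →
      ∀ x, quadBracket W (fun y => ∏ i, y i) H x = 0 := by
  intro H _ x
  have hskew := skew_aux' n W hW
  have hrow : ∀ i, ∑ j, W i j = 0 := by
    intro i
    rw [Finset.sum_congr rfl (fun j _ => hW i j)]
    exact rowsum_zero' n i
  exact main_aux n W hskew hrow H x
end

section
/- For the 7-dimensional replicator system on the tournament formed by embedding two disjoint 3-cycles (vertices {1,2,3} and {4,5,6}) and a singleton 7 into a 3-cycle (with block edges {1,2,3}→{4,5,6}, {4,5,6}→7, 7→{1,2,3}), the quantity f₃ = (x₁+x₂+x₃)(x₄+x₅+x₆)x₇ is conserved along solutions. -/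
/-! Within each block the cyclic terms cancel, so the block sums `S₁ = x₁+x₂+x₃`, `S₂ = x₄+x₅+x₆`
and `x₇` obey the replicator equation of a 3-cycle: `Ṡ₁ = S₁(x₇ - S₂)`, `Ṡ₂ = S₂(S₁ - x₇)`,
`ẋ₇ = x₇(S₂ - S₁)`. Their logarithmic derivatives sum to zero, so `S₁ S₂ x₇` is constant. -/

theorem HasDerivAt.mul_mul_eq_zero_of_add_add_eq_zero {a b c : ℝ → ℝ} {t α β γ : ℝ}
    (ha : HasDerivAt a (a t * α) t) (hb : HasDerivAt b (b t * β) t)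
    (hc : HasDerivAt c (c t * γ) t) (hsum : α + β + γ = 0) :
    HasDerivAt (fun s => a s * b s * c s) 0 t :=
  ((ha.mul hb).mul hc).congr_deriv <| by
    simp only [Pi.mul_apply]; linear_combination a t * b t * c t * hsum

/-- For the 7-dimensional replicator system on the tournament obtained by embedding
two 3-cycles `{1,2,3}`, `{4,5,6}` and a singleton `7` into a 3-cycle
(edges 1→2→3→1, 4→5→6→4, {1,2,3}→{4,5,6}, {4,5,6}→7, 7→{1,2,3}),
the quantity `f₃ = (x₁+x₂+x₃)(x₄+x₅+x₆)x₇` is conserved. -/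
theorem embedded7_f3_conserved (x₁ x₂ x₃ x₄ x₅ x₆ x₇ : ℝ → ℝ)
    (h₁ : ∀ t, HasDerivAt x₁ (x₁ t * (x₃ t + x₇ t - x₂ t - x₄ t - x₅ t - x₆ t)) t)
    (h₂ : ∀ t, HasDerivAt x₂ (x₂ t * (x₁ t + x₇ t - x₃ t - x₄ t - x₅ t - x₆ t)) t)
    (h₃ : ∀ t, HasDerivAt x₃ (x₃ t * (x₂ t + x₇ t - x₁ t - x₄ t - x₅ t - x₆ t)) t)
    (h₄ : ∀ t, HasDerivAt x₄ (x₄ t * (x₆ t + x₁ t + x₂ t + x₃ t - x₅ t - x₇ t)) t)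
    (h₅ : ∀ t, HasDerivAt x₅ (x₅ t * (x₄ t + x₁ t + x₂ t + x₃ t - x₆ t - x₇ t)) t)
    (h₆ : ∀ t, HasDerivAt x₆ (x₆ t * (x₅ t + x₁ t + x₂ t + x₃ t - x₄ t - x₇ t)) t)
    (h₇ : ∀ t, HasDerivAt x₇ (x₇ t * (x₄ t + x₅ t + x₆ t - x₁ t - x₂ t - x₃ t)) t) :
    ∀ t, HasDerivAt (fun s => (x₁ s + x₂ s + x₃ s) * (x₄ s + x₅ s + x₆ s) * x₇ s) 0 t := by
  intro t
  have hS₁ : HasDerivAt (fun s => x₁ s + x₂ s + x₃ s)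
      ((x₁ t + x₂ t + x₃ t) * (x₇ t - (x₄ t + x₅ t + x₆ t))) t :=
    (((h₁ t).add (h₂ t)).add (h₃ t)).congr_deriv (by ring)
  have hS₂ : HasDerivAt (fun s => x₄ s + x₅ s + x₆ s)
      ((x₄ t + x₅ t + x₆ t) * (x₁ t + x₂ t + x₃ t - x₇ t)) t :=
    (((h₄ t).add (h₅ t)).add (h₆ t)).congr_deriv (by ring)
  exact hS₁.mul_mul_eq_zero_of_add_add_eq_zero hS₂ (h₇ t) (by ring)
end
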